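/- arXiv:1411.3221 — 2 statements merged into one kernel-verified Lean document; each statement's English description precedes it below -/
import Mathlib

section
/- Let F : 𝒜 ⥤ ℬ be an exact functor between abelian categories (an additive functor preserving finite limits and finite colimits). Suppose that for every object A of 𝒜 the induced map on subobject lattices is injective, i.e., for all subobjects P, Q of A, equality of the subobject of F.obj A represented by F.map (P.arrow) with the subobject represented by F.map (Q.arrow) implies P = Q. Then F is faithful. -/
/-!
If `F f = F g`, then `φ = f - g` satisfies `F φ = 0`. Since `F` preserves kernels, it sends the
kernel subobject of `φ` to the kernel subobject of `F φ = 0`, which is `⊤`; it also sends `⊤` to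
`⊤`. Injectivity on subobjects gives `ker φ = ⊤`, that is `φ = 0`.
-/

open CategoryTheory CategoryTheory.Limits

namespace CategoryTheory.Limits

theorem kernelSubobject_eq_top_iff {C : Type*} [Category C] [HasZeroMorphisms C] {X Y : C}
    (f : X ⟶ Y) [HasKernel f] : kernelSubobject f = ⊤ ↔ f = 0 := by
  refine ⟨fun htop => ?_, fun hf => hf ▸ kernelSubobject_zero⟩
  have : IsIso (kernel.ι f) := by
    rw [Subobject.isIso_iff_mk_eq_top]
    exact htop
  exact eq_zero_of_epi_kernel f

end CategoryTheory.Limits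

namespace CategoryTheory.Functor

variable {C D : Type*} [Category C] [Category D]

theorem faithful_of_map_eq_zero [Preadditive C] [Preadditive D] (F : C ⥤ D) [F.Additive]
    (h : ∀ {X Y : C} (f : X ⟶ Y), F.map f = 0 → f = 0) : F.Faithful where
  map_injective {_ _} f g hfg := sub_eq_zero.mp (h _ (by rw [F.map_sub, hfg, sub_self]))

section Kernel

variable [HasZeroMorphisms C] [HasZeroMorphisms D] (F : C ⥤ D) [F.PreservesZeroMorphisms]
  {X Y : C} (f : X ⟶ Y) [HasKernel f] [PreservesLimit (parallelPair f 0) F]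

theorem map_kernelSubobject_arrow :
    F.map (kernelSubobject f).arrow =
      F.map (kernelSubobjectIso f).hom ≫ (PreservesKernel.iso F f).hom ≫ kernel.ι (F.map f) := by
  rw [PreservesKernel.iso_hom, kernelComparison_comp_ι, ← F.map_comp, kernelSubobject_arrow]

instance mono_map_kernelSubobject_arrow : Mono (F.map (kernelSubobject f).arrow) := by
  rw [map_kernelSubobject_arrow]
  infer_instance

theorem mk_map_kernelSubobject_arrow :
    Subobject.mk (F.map (kernelSubobject f).arrow) = kernelSubobject (F.map f) :=
  Subobject.mk_eq_mk_of_comm _ _ (F.mapIso (kernelSubobjectIso f) ≪≫ PreservesKernel.iso F f)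
    (by rw [Iso.trans_hom, Category.assoc, mapIso_hom, map_kernelSubobject_arrow])

end Kernel

end CategoryTheory.Functor

theorem exact_functor_faithful_of_subobject_map_injective_general
    {𝒜 ℬ : Type*} [Category 𝒜] [Category ℬ] [Abelian 𝒜] [Abelian ℬ]
    (F : 𝒜 ⥤ ℬ) [F.Additive] [PreservesFiniteLimits F]
    (h : ∀ (A : 𝒜) (P Q : Subobject A),
      Subobject.mk (F.map P.arrow) = Subobject.mk (F.map Q.arrow) → P = Q) :
    F.Faithful := by
  refine F.faithful_of_map_eq_zero fun {X _} f hf => (kernelSubobject_eq_top_iff f).mp ?_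
  apply h X
  rw [F.mk_map_kernelSubobject_arrow, (kernelSubobject_eq_top_iff _).mpr hf,
    Subobject.mk_eq_top_of_isIso]

/-- If the map induced on subobject lattices by an exact functor between abelian
categories is injective for every object, then the functor is faithful. -/
theorem exact_functor_faithful_of_subobject_map_injective
    {𝒜 ℬ : Type*} [Category 𝒜] [Category ℬ] [Abelian 𝒜] [Abelian ℬ]
    (F : 𝒜 ⥤ ℬ) [F.Additive] [PreservesFiniteLimits F] [PreservesFiniteColimits F]
    (h : ∀ (A : 𝒜) (P Q : Subobject A),
      Subobject.mk (F.map P.arrow) = Subobject.mk (F.map Q.arrow) → P = Q) :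
    F.Faithful :=
  exact_functor_faithful_of_subobject_map_injective_general F h
end

section
/- Let k be a field and R a finite-dimensional k-algebra, and let M and C be finitely generated R-modules (each carrying the induced k-vector space structure, on which R acts k-linearly). Then there exist n : ℕ and an R-linear map Δ : M →ₗ[R] (Fin n → C) such that every morphism from M to any module in add(C) factors initially through Δ; concretely: for every R-module N which is a direct summand of a finite power of C (i.e., for which there exist m : ℕ and R-linear maps ι : N →ₗ[R] (Fin m → C) and π : (Fin m → C) →ₗ[R] N with π ∘ ι = id), every R-linear map g : M →ₗ[R] N satisfies g = h ∘ Δ for some R-linear map h : (Fin n → C) →ₗ[R] N. That is, Δ is an add(C)-preenvelope of M. -/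
/-!
The `k`-vector space `Hom_R(M, C)` is finite-dimensional; take a basis `f₁, …, fₙ` and
`Δ = (f₁, …, fₙ) : M → Cⁿ`. Any `g : M → C` is a `k`-combination `∑ aᵢ fᵢ`, so it factors through
`Δ` via `∑ aᵢ prᵢ : Cⁿ → C`, which is `R`-linear because `k` acts centrally. Factorization through
`Δ` passes to finite powers of `C` componentwise and to their retracts by composing with `π`.
-/

def LinearMap.IsPreenvelopeFor {R M X : Type*} [Semiring R] [AddCommMonoid M] [AddCommMonoid X]
    [Module R M] [Module R X] (Δ : M →ₗ[R] X) (N : Type*) [AddCommMonoid N] [Module R N] : Prop :=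
  ∀ g : M →ₗ[R] N, ∃ h : X →ₗ[R] N, h ∘ₗ Δ = g

namespace LinearMap.IsPreenvelopeFor

variable {R M X : Type*} [Semiring R] [AddCommMonoid M] [AddCommMonoid X] [Module R M]
  [Module R X] {Δ : M →ₗ[R] X}

theorem pi {ι : Type*} {φ : ι → Type*} [∀ i, AddCommMonoid (φ i)] [∀ i, Module R (φ i)]
    (hΔ : ∀ i, Δ.IsPreenvelopeFor (φ i)) : Δ.IsPreenvelopeFor (∀ i, φ i) := by
  intro g
  choose h hh using fun i => hΔ i (LinearMap.proj i ∘ₗ g)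
  exact ⟨LinearMap.pi h, by ext x i; exact LinearMap.congr_fun (hh i) x⟩

theorem of_retract {Y N : Type*} [AddCommMonoid Y] [Module R Y] [AddCommMonoid N] [Module R N]
    (hΔ : Δ.IsPreenvelopeFor Y) {ι : N →ₗ[R] Y} {π : Y →ₗ[R] N} (hπι : π ∘ₗ ι = LinearMap.id) :
    Δ.IsPreenvelopeFor N := by
  intro g
  obtain ⟨h, hh⟩ := hΔ (ι ∘ₗ g)
  exact ⟨π ∘ₗ h, by rw [LinearMap.comp_assoc, hh, ← LinearMap.comp_assoc, hπι, LinearMap.id_comp]⟩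

end LinearMap.IsPreenvelopeFor

theorem LinearMap.isPreenvelopeFor_pi_of_span_eq_top {k R M C ι : Type*} [CommSemiring k]
    [Semiring R] [AddCommMonoid M] [AddCommMonoid C] [Module R M] [Module R C] [Module k C]
    [SMulCommClass R k C] [Fintype ι] {f : ι → M →ₗ[R] C}
    (hf : Submodule.span k (Set.range f) = ⊤) : (LinearMap.pi f).IsPreenvelopeFor C := by
  intro g
  obtain ⟨a, ha⟩ := Submodule.mem_span_range_iff_exists_fun k |>.mp (hf ▸ Submodule.mem_top (x := g))
  refine ⟨∑ i, a i • LinearMap.proj i, ?_⟩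
  ext x
  simp [← ha]

theorem LinearMap.finiteDimensional_of_isScalarTower (k R M C : Type*) [Field k] [Ring R]
    [Algebra k R] [AddCommGroup M] [Module R M] [Module k M] [IsScalarTower k R M]
    [FiniteDimensional k M] [AddCommGroup C] [Module R C] [Module k C] [IsScalarTower k R C]
    [FiniteDimensional k C] : FiniteDimensional k (M →ₗ[R] C) :=
  Module.Finite.of_injective (LinearMap.restrictScalarsₗ k R M C k)
    (LinearMap.restrictScalars_injective k)

/-- Over a finite-dimensional algebra `R`, every finitely generated module `M` has an
`add(C)`-preenvelope `Δ : M →ₗ[R] (Fin n → C)` for any finitely generated module `C`: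
every map from `M` to a direct summand of a finite power of `C` factors through `Δ`. -/
theorem exists_addC_preenvelope
    (k : Type*) [Field k] (R : Type*) [Ring R] [Algebra k R] [Module.Finite k R]
    (M : Type*) [AddCommGroup M] [Module R M] [Module k M] [IsScalarTower k R M]
    [Module.Finite R M]
    (C : Type*) [AddCommGroup C] [Module R C] [Module k C] [IsScalarTower k R C]
    [Module.Finite R C] :
    ∃ (n : ℕ) (Δ : M →ₗ[R] (Fin n → C)),
      ∀ (N : Type*) [AddCommGroup N] [Module R N],
        (∃ (m : ℕ) (ι : N →ₗ[R] (Fin m → C)) (π : (Fin m → C) →ₗ[R] N),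
          π.comp ι = LinearMap.id) →
        ∀ g : M →ₗ[R] N, ∃ h : (Fin n → C) →ₗ[R] N, h.comp Δ = g := by
  have : Module.Finite k M := .trans R M
  have : Module.Finite k C := .trans R C
  have := LinearMap.finiteDimensional_of_isScalarTower k R M C
  let b := Module.finBasis k (M →ₗ[R] C)
  refine ⟨_, LinearMap.pi b, fun N _ _ ⟨m, ι, π, hπι⟩ => ?_⟩
  have hC := LinearMap.isPreenvelopeFor_pi_of_span_eq_top b.span_eq
  exact (LinearMap.IsPreenvelopeFor.pi fun _ : Fin m => hC).of_retract hπι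
end
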